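/- Let k > 1, θ > 0, d₁, d₂ > 0 satisfy d₁/d₂ > (√(k+1)−√2)⁴ / (4θk(√(2(k+1))−1)). With M* = (√(k+1)−√2)²/k and ℓₙ = n√((d₁+d₂)/M*), the quantity D_j(λ*) = θ(√(2(k+1))−1)/k − M* · d₂ j²/ℓₙ² + d₁ d₂ j⁴/ℓₙ⁴ is strictly positive for every real j > 0. -/

import Mathlib

/-! A quadratic in `x = j² / ℓₙ²` with positive constant term and negative discriminant has no
real root, hence stays positive; the hypothesis on `d₁ / d₂` is exactly the negativity of the
discriminant of `D_j(λ*)` viewed as such a quadratic. -/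

theorem quadratic_pos_of_discrim_neg {K : Type*} [Field K] [LinearOrder K] [IsStrictOrderedRing K]
    {a b c : K} (hc : 0 < c) (h : discrim a b c < 0) (x : K) :
    0 < a * (x * x) + b * x + c := by
  have key : 4 * c * (a * (x * x) + b * x + c) = (b * x + 2 * c) ^ 2 - discrim a b c * (x * x) := by
    rw [discrim]; ring
  have hpos : 0 < (b * x + 2 * c) ^ 2 - discrim a b c * (x * x) := by
    rcases eq_or_ne x 0 with rfl | hx
    · simp only [mul_zero, zero_add, sub_zero]; positivity
    · nlinarith [sq_nonneg (b * x + 2 * c), mul_self_pos.mpr hx]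
  exact pos_of_mul_pos_right (key ▸ hpos) (by positivity)

theorem stmt12_general (d₁ d₂ θ k : ℝ) (hd₂ : 0 < d₂) (hθ : 0 < θ)
    (hk : 1 < k)
    (hdd : d₁ / d₂ >
      (Real.sqrt (k + 1) - Real.sqrt 2) ^ 4 /
        (4 * θ * k * (Real.sqrt (2 * (k + 1)) - 1)))
    (n : ℕ) :
    let Mstar := (Real.sqrt (k + 1) - Real.sqrt 2) ^ 2 / k
    let ln := (n : ℝ) * Real.sqrt ((d₁ + d₂) / Mstar)
    ∀ j : ℝ, 0 < j →
      0 < θ * (Real.sqrt (2 * (k + 1)) - 1) / k - Mstar * d₂ * j ^ 2 / ln ^ 2 +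
          d₁ * d₂ * j ^ 4 / ln ^ 4 := by
  intro Mstar ln j _
  set s := Real.sqrt (k + 1) - Real.sqrt 2
  set t := Real.sqrt (2 * (k + 1)) - 1
  have hk₀ : 0 < k := by linarith
  have ht : 0 < t := by
    rw [sub_pos, Real.lt_sqrt zero_le_one]; linarith
  have hratio : s ^ 4 * d₂ < d₁ * (4 * θ * k * t) :=
    (div_lt_div_iff₀ (by positivity) hd₂).mp hdd
  have hdisc : discrim (d₁ * d₂) (-(Mstar * d₂)) (θ * t / k) < 0 := by
    have : discrim (d₁ * d₂) (-(Mstar * d₂)) (θ * t / k)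
        = d₂ / k ^ 2 * (s ^ 4 * d₂ - d₁ * (4 * θ * k * t)) := by
      simp only [discrim, Mstar]; field_simp; ring
    rw [this]
    exact mul_neg_of_pos_of_neg (by positivity) (by linarith)
  refine (quadratic_pos_of_discrim_neg (by positivity) hdisc (j ^ 2 / ln ^ 2)).trans_eq ?_
  ring

/-- Under the diffusion-ratio condition, the determinant term
`D_j(λ*) = θ(√(2(k+1))−1)/k − M* d₂ j²/ℓₙ² + d₁d₂ j⁴/ℓₙ⁴` is positive for all
real `j > 0`. -/
theorem stmt12 (d₁ d₂ θ k : ℝ) (hd₁ : 0 < d₁) (hd₂ : 0 < d₂) (hθ : 0 < θ)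
    (hk : 1 < k)
    (hdd : d₁ / d₂ >
      (Real.sqrt (k + 1) - Real.sqrt 2) ^ 4 /
        (4 * θ * k * (Real.sqrt (2 * (k + 1)) - 1)))
    (n : ℕ) (hn : 1 ≤ n) :
    let Mstar := (Real.sqrt (k + 1) - Real.sqrt 2) ^ 2 / k
    let ln := (n : ℝ) * Real.sqrt ((d₁ + d₂) / Mstar)
    ∀ j : ℝ, 0 < j →
      0 < θ * (Real.sqrt (2 * (k + 1)) - 1) / k - Mstar * d₂ * j ^ 2 / ln ^ 2 +
          d₁ * d₂ * j ^ 4 / ln ^ 4 :=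
  stmt12_general d₁ d₂ θ k hd₂ hθ hk hdd n
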